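/- Let Δ = (C, δ) be a building of type (W, S), let P and Q be panels, and let H be a group of automorphisms stabilizing both P and Q such that H fixes no chamber of P. Then P and Q are parallel panels. -/

import Mathlib

/-!
Projection onto a panel commutes with automorphisms stabilizing it, so if `proj_P` were
constant on `Q` its value would be a chamber of `P` fixed by `H`. Hence `proj_P` takes two
values on `Q`, and it remains to show that this forces `P` and `Q` to be parallel.

Let `p₀ ∈ P`, `q₀ ∈ Q` be at minimal distance `w = δ p₀ q₀`, and let `s`, `t` be the types of
`P`, `Q`. Minimality gives `ℓ(s w) = ℓ(w t) = ℓ(w) + 1`. If `ℓ(s w t) = ℓ(w) + 2`, every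
chamber of `Q` projects to `p₀`. Otherwise `ℓ(s w t) = ℓ(w)`, and each `p ∈ P \ {p₀}` is at
distance `s w t` from some chamber of `Q`, which therefore projects to `p`; symmetrically for `Q`.
-/

noncomputable section
open Classical

namespace BldgPaper

variable {B W : Type*} [Group W] {M : CoxeterMatrix B}

/-- `(W,S)` is 2-complete: `2 < m_{st} < ∞` for all distinct `s,t` (entry `0` codes `∞`). -/
def TwoComplete (M : CoxeterMatrix B) : Prop := ∀ i j : B, i ≠ j → 2 < M i j

/-- `(W,S)` is `Ã₂`-free: no three distinct generators have all pairwise orders equal to `3`. -/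
def A2TildeFree (M : CoxeterMatrix B) : Prop :=
  ∀ i j k : B, i ≠ j → j ≠ k → i ≠ k → ¬ (M i j = 3 ∧ M j k = 3 ∧ M i k = 3)

variable (cs : CoxeterSystem M W) {C : Type*} (δ : C → C → W)

/-- The W-metric building axioms for a distance function `δ` on a set of chambers. -/
structure IsBuilding : Prop where
  nonempty : Nonempty C
  eq_one_iff : ∀ x y, δ x y = 1 ↔ x = y
  step : ∀ x y z (i : B), δ y z = cs.simple i → δ x z = δ x y ∨ δ x z = δ x y * cs.simple i
  step_of_length : ∀ x y z (i : B), δ y z = cs.simple i →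
      cs.length (δ x y * cs.simple i) = cs.length (δ x y) + 1 → δ x z = δ x y * cs.simple i
  exists_step : ∀ x y (i : B), ∃ z, δ y z = cs.simple i ∧ δ x z = δ x y * cs.simple i

/-- The standard parabolic subgroup `⟨J⟩`. -/
def parab (J : Set B) : Subgroup W := Subgroup.closure (cs.simple '' J)

/-- The `J`-residue of the chamber `x`. -/
def residue (J : Set B) (x : C) : Set C := {y | δ x y ∈ parab cs J}

def IsResidue (R : Set C) : Prop := ∃ (J : Set B) (x : C), R = residue cs δ J x

def IsPanel (R : Set C) : Prop := ∃ (i : B) (x : C), R = residue cs δ {i} x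

/-- A spherical residue of rank 2. -/
def IsSphRank2 (R : Set C) : Prop :=
  ∃ (i j : B) (x : C), i ≠ j ∧ (parab cs {i, j} : Set W).Finite ∧ R = residue cs δ {i, j} x

/-- `g` is the gate (projection) of `c` onto the set `R`. -/
def IsGate (R : Set C) (c g : C) : Prop :=
  g ∈ R ∧ ∀ y ∈ R, cs.length (δ c y) = cs.length (δ c g) + cs.length (δ g y)

/-- The projection `proj_R c` of a chamber onto a residue (the gate). -/
noncomputable def proj (R : Set C) (c : C) : C :=
  if h : ∃ g, IsGate cs δ R c g then h.choose else c

/-- `proj_R T = { proj_R t | t ∈ T }`. -/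
def projSet (R T : Set C) : Set C := proj cs δ R '' T

/-- Two residues are parallel if they project onto each other. -/
def Parallel (R T : Set C) : Prop :=
  projSet cs δ R T = R ∧ projSet cs δ T R = T

/-- An apartment: a nonempty, convex and thin set of chambers. -/
def IsApartment (A : Set C) : Prop :=
  A.Nonempty ∧
  (∀ P : Set C, IsPanel cs δ P → (P ∩ A).Nonempty → ∀ c ∈ A, proj cs δ P c ∈ A) ∧
  (∀ P : Set C, IsPanel cs δ P → (P ∩ A).Nonempty → (P ∩ A).ncard = 2)

/-- A root of the apartment `A`: a subset isometric to a half-space `α_i` of `W`. -/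
def IsRootOf (A α : Set C) : Prop :=
  α ⊆ A ∧ ∃ (i : B) (f : C → W),
    Set.BijOn f α {w : W | cs.length w < cs.length (cs.simple i * w)} ∧
    ∀ x ∈ α, ∀ y ∈ α, δ x y = (f x)⁻¹ * f y

/-- `x` and `y` are opposite in the (spherical) residue `R`:
their distance has maximal length among chambers of `R`. -/
def OppChambersIn (R : Set C) (x y : C) : Prop :=
  x ∈ R ∧ y ∈ R ∧ ∀ z ∈ R, cs.length (δ x z) ≤ cs.length (δ x y)

/-- The residues `P` and `Q` are opposite in `R`. -/
def OppResiduesIn (R P Q : Set C) : Prop :=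
  P ⊆ R ∧ Q ⊆ R ∧ ∀ p ∈ P, ∃ q ∈ Q, OppChambersIn cs δ R p q

/-- `(P 0, …, P m)` is a compatible path of panels, where for `1 ≤ i ≤ m` the
set `R i` is the unique rank-2 spherical residue `R(P (i-1), P i)` in which the
consecutive panels `P (i-1)` and `P i` are opposite. -/
def IsCompatiblePath (m : ℕ) (P : ℕ → Set C) (R : ℕ → Set C) : Prop :=
  (∀ i ≤ m, IsPanel cs δ (P i)) ∧
  ∀ i, 1 ≤ i → i ≤ m →
    IsSphRank2 cs δ (R i) ∧ OppResiduesIn cs δ (R i) (P (i-1)) (P i) ∧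
    projSet cs δ (R i) (P 0) = P (i-1)

/-- A triangle: three pairwise distinct rank-2 spherical residues whose mutual
projections are panels (T1), such that the two panels obtained by projecting onto any
one of them are not parallel (T2). -/
def IsTriangle (R₁ R₂ R₃ : Set C) : Prop :=
  R₁ ≠ R₂ ∧ R₂ ≠ R₃ ∧ R₁ ≠ R₃ ∧
  IsSphRank2 cs δ R₁ ∧ IsSphRank2 cs δ R₂ ∧ IsSphRank2 cs δ R₃ ∧
  IsPanel cs δ (projSet cs δ R₁ R₂) ∧ IsPanel cs δ (projSet cs δ R₂ R₁) ∧
  IsPanel cs δ (projSet cs δ R₁ R₃) ∧ IsPanel cs δ (projSet cs δ R₃ R₁) ∧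
  IsPanel cs δ (projSet cs δ R₂ R₃) ∧ IsPanel cs δ (projSet cs δ R₃ R₂) ∧
  ¬ Parallel cs δ (projSet cs δ R₁ R₂) (projSet cs δ R₁ R₃) ∧
  ¬ Parallel cs δ (projSet cs δ R₂ R₁) (projSet cs δ R₂ R₃) ∧
  ¬ Parallel cs δ (projSet cs δ R₃ R₁) (projSet cs δ R₃ R₂)

/-! Coxeter complex notions: the building `(W, δW)` with `δW x y = x⁻¹ * y`. -/

/-- The distance function of the Coxeter complex `Σ(W,S)`. -/
def δW : W → W → W := fun x y => x⁻¹ * y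

/-- The half-space `α_i = {w | ℓ(s_i w) > ℓ(w)}`. -/
def halfspace (i : B) : Set W := {v | cs.length v < cs.length (cs.simple i * v)}

/-- The root `w · α_i` of `(W,S)`. -/
def rootW (w : W) (i : B) : Set W := (w * ·) '' halfspace cs i

/-- `α` is a root with associated reflection `t`. -/
def IsRootPair (α : Set W) (t : W) : Prop :=
  ∃ (w : W) (i : B), α = rootW cs w i ∧ t = w * cs.simple i * w⁻¹

/-- `R` belongs to `∂²α` for a root with reflection `t`: it is a spherical rank-2
residue of the Coxeter complex stabilized by `t`. -/
def MemBd2 (t : W) (R : Set W) : Prop :=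
  IsSphRank2 cs (δW (W := W)) R ∧ (t * ·) '' R = R

/-- `{α 0, α 1, α 2}` (with reflections `t 0, t 1, t 2`) is a combinatorial triangle. -/
def IsCombTriangle (α : Fin 3 → Set W) (t : Fin 3 → W) : Prop :=
  (∀ a, IsRootPair cs (α a) (t a)) ∧
  (∀ a b, a ≠ b → t a ≠ t b) ∧
  (∀ a b : Fin 3, IsOfFinOrder (t a * t b)) ∧
  (¬ ∃ R : Set W, ∀ a, MemBd2 cs (t a) R) ∧
  (∀ a b c : Fin 3, a ≠ b → b ≠ c → a ≠ c →
    ∃ σ : Set W, MemBd2 cs (t b) σ ∧ MemBd2 cs (t c) σ ∧ σ ⊆ α a)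


/-- A (type-preserving) automorphism of the building. -/
def IsAutom (g : Equiv.Perm C) : Prop := ∀ x y, δ (g x) (g y) = δ x y

/-- The simple root `α_i` of the apartment `A` determined by the base chamber `c`. -/
def simpleRootAt (A : Set C) (c : C) (i : B) : Set C :=
  {x ∈ A | cs.length (δ c x) < cs.length (cs.simple i * δ c x)}

/-- `U` is the root group associated with the root `α`: its elements are automorphisms
fixing pointwise every panel meeting `α` in at least two chambers, and it acts simply
transitively on `P \ α` for every panel `P` meeting `α` in exactly one chamber. -/
def IsRootGroup (α : Set C) (U : Subgroup (Equiv.Perm C)) : Prop :=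
  (∀ g ∈ U, IsAutom δ g) ∧
  (∀ g ∈ U, ∀ P : Set C, IsPanel cs δ P → 2 ≤ (P ∩ α).ncard → ∀ x ∈ P, g x = x) ∧
  (∀ P : Set C, IsPanel cs δ P → (P ∩ α).ncard = 1 →
    ∀ x ∈ P \ α, ∀ y ∈ P \ α, ∃! g : Equiv.Perm C, g ∈ U ∧ g x = y)

/-- Opposite chambers in a spherical building: their distance has maximal length in `W`. -/
def OppositeChambers (x y : C) : Prop := ∀ u : W, cs.length u ≤ cs.length (δ x y)

/-- Opposite panels in a spherical building. -/
def OppositePanels (P Q : Set C) : Prop :=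
  (∀ p ∈ P, ∃ q ∈ Q, OppositeChambers cs δ p q) ∧
  (∀ q ∈ Q, ∃ p ∈ P, OppositeChambers cs δ q p)


section Building

variable {cs} {δ}

lemma mem_parab_singleton {i : B} {w : W} :
    w ∈ parab cs {i} ↔ w = 1 ∨ w = cs.simple i := by
  refine ⟨fun h => ?_, ?_⟩
  · rw [parab, Set.image_singleton, Subgroup.mem_closure_singleton] at h
    obtain ⟨n, rfl⟩ := h
    have hsq : cs.simple i ^ (2 : ℤ) = 1 := by rw [zpow_two, cs.simple_mul_simple_self]
    rw [← Int.mul_ediv_add_emod n 2, zpow_add, zpow_mul, hsq, one_zpow, one_mul]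
    rcases Int.emod_two_eq_zero_or_one n with h | h <;> simp [h]
  · rintro (rfl | rfl)
    · exact one_mem _
    · exact Subgroup.subset_closure ⟨i, rfl, rfl⟩

lemma IsBuilding.delta_self (hb : IsBuilding cs δ) (x : C) : δ x x = 1 :=
  (hb.eq_one_iff x x).2 rfl

lemma IsBuilding.delta_comm_of_eq_simple (hb : IsBuilding cs δ) {x y : C} {i : B}
    (h : δ x y = cs.simple i) : δ y x = cs.simple i := by
  rcases hb.step y x y i h with h' | h'
  · rw [hb.delta_self, eq_comm, hb.eq_one_iff] at h'
    subst h'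
    simpa [hb.delta_self] using congrArg cs.length h
  · rw [hb.delta_self, ← cs.inv_simple i] at h'
    simpa using eq_inv_of_mul_eq_one_left h'.symm

lemma IsBuilding.delta_eq_mul (hb : IsBuilding cs δ) {x y z : C}
    (h : cs.length (δ x z * δ z y) = cs.length (δ x z) + cs.length (δ z y)) :
    δ x y = δ x z * δ z y := by
  induction hn : cs.length (δ z y) generalizing y with
  | zero =>
    rw [cs.length_eq_zero_iff, hb.eq_one_iff] at hn
    rw [← hn, hb.delta_self, mul_one]
  | succ n ih =>
    obtain ⟨j, hj⟩ := cs.exists_rightDescent_of_ne_one (w := δ z y) fun h1 => by simp [h1] at hn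
    rw [cs.isRightDescent_iff] at hj
    obtain ⟨y', hyy', hzy'⟩ := hb.exists_step z y j
    have hle := cs.length_mul_le (δ x z) (δ z y * cs.simple j)
    have hge := cs.length_mul_simple (δ x z * δ z y) j
    rw [← mul_assoc] at hle
    have hxy' : δ x y' = δ x z * δ z y' :=
      ih (by rw [hzy', ← mul_assoc]; omega) (by rw [hzy']; omega)
    have hxy'_mul : δ x y' * cs.simple j = δ x z * δ z y := by
      rw [hxy', hzy', ← mul_assoc, cs.simple_mul_simple_cancel_right]
    have hlen : cs.length (δ x y' * cs.simple j) = cs.length (δ x y') + 1 := by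
      rw [hxy'_mul, hxy', hzy', ← mul_assoc]
      omega
    rw [hb.step_of_length x y' y j (hb.delta_comm_of_eq_simple hyy') hlen, hxy'_mul]

lemma IsBuilding.delta_comm (hb : IsBuilding cs δ) (x y : C) : δ y x = (δ x y)⁻¹ := by
  induction hn : cs.length (δ x y) generalizing y with
  | zero =>
    rw [cs.length_eq_zero_iff, hb.eq_one_iff] at hn
    rw [← hn, hb.delta_self, inv_one]
  | succ n ih =>
    obtain ⟨j, hj⟩ := cs.exists_rightDescent_of_ne_one (w := δ x y) fun h1 => by simp [h1] at hn
    rw [cs.isRightDescent_iff] at hj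
    obtain ⟨z, hyz, hxz⟩ := hb.exists_step x y j
    have hzx : δ z x = cs.simple j * (δ x y)⁻¹ := by
      rw [ih z (by rw [hxz]; omega), hxz, mul_inv_rev, cs.inv_simple]
    have hlen : cs.length (cs.simple j * (δ x y)⁻¹) = n := by
      rw [← cs.inv_simple, ← mul_inv_rev, cs.length_inv]
      omega
    have hyzx : cs.length (δ y z * δ z x) = cs.length (δ y z) + cs.length (δ z x) := by
      rw [hyz, hzx, cs.simple_mul_simple_cancel_left, cs.length_inv, cs.length_simple, hlen]
      omega
    rw [hb.delta_eq_mul hyzx, hyz, hzx, cs.simple_mul_simple_cancel_left]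

lemma IsBuilding.length_delta_comm (hb : IsBuilding cs δ) (x y : C) :
    cs.length (δ y x) = cs.length (δ x y) := by
  rw [hb.delta_comm, cs.length_inv]

lemma self_mem_residue (hb : IsBuilding cs δ) (J : Set B) (x : C) : x ∈ residue cs δ J x := by
  show δ x x ∈ parab cs J
  exact hb.delta_self x ▸ one_mem _

lemma mem_residue_of_delta_eq_simple (hb : IsBuilding cs δ) {J : Set B} {i : B} (hi : i ∈ J)
    {x y z : C} (hy : y ∈ residue cs δ J x) (h : δ y z = cs.simple i) :
    z ∈ residue cs δ J x := by
  change δ x y ∈ parab cs J at hy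
  rcases hb.step x y z i h with h' | h' <;> change δ x z ∈ parab cs J <;> rw [h']
  · exact hy
  · exact mul_mem hy (Subgroup.subset_closure ⟨i, hi, rfl⟩)

lemma delta_eq_simple_of_mem_panel (hb : IsBuilding cs δ) {i : B} {x y z : C}
    (hy : y ∈ residue cs δ {i} x) (hz : z ∈ residue cs δ {i} x) (hne : y ≠ z) :
    δ y z = cs.simple i := by
  have from_center : ∀ {z}, z ∈ residue cs δ {i} x → x ≠ z → δ x z = cs.simple i :=
    fun hz hne => (mem_parab_singleton.1 hz).resolve_left (mt (hb.eq_one_iff _ _).1 hne)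
  obtain rfl | hxy := eq_or_ne x y
  · exact from_center hz hne
  have hyx := hb.delta_comm_of_eq_simple (from_center hy hxy)
  obtain rfl | hxz := eq_or_ne x z
  · exact hyx
  rcases hb.step y x z i (from_center hz hxz) with h | h
  · rw [h, hyx]
  · rw [hyx, cs.simple_mul_simple_self, hb.eq_one_iff] at h
    exact absurd h hne

lemma IsGate.eq (hb : IsBuilding cs δ) {R : Set C} {c g g' : C}
    (h : IsGate cs δ R c g) (h' : IsGate cs δ R c g') : g = g' := by
  have e := h.2 g' h'.1
  have e' := h'.2 g h.1
  rw [← hb.eq_one_iff, ← cs.length_eq_zero_iff]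
  omega

lemma isGate_proj {R : Set C} {c : C} (h : ∃ g, IsGate cs δ R c g) :
    IsGate cs δ R c (proj cs δ R c) := by
  rw [proj, dif_pos h]
  exact h.choose_spec

lemma proj_eq_of_forall_length_le (hb : IsBuilding cs δ) {R : Set C} {c y : C}
    (hR : ∃ g, IsGate cs δ R c g) (hy : y ∈ R)
    (hmin : ∀ z ∈ R, cs.length (δ c y) ≤ cs.length (δ c z)) : proj cs δ R c = y := by
  have hgate := isGate_proj hR
  have e := hgate.2 y hy
  have := hmin _ hgate.1
  rw [← hb.eq_one_iff, ← cs.length_eq_zero_iff]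
  omega

lemma proj_apply_of_isAutom (hb : IsBuilding cs δ) {R : Set C} {c : C}
    (hR : ∃ g, IsGate cs δ R c g) {g : Equiv.Perm C} (hg : IsAutom δ g) (hgR : g '' R = R) :
    proj cs δ R (g c) = g (proj cs δ R c) := by
  have hgate := isGate_proj hR
  have hgate' : IsGate cs δ R (g c) (g (proj cs δ R c)) := by
    refine ⟨hgR.subset (Set.mem_image_of_mem g hgate.1), ?_⟩
    intro y hy
    rw [← hgR] at hy
    obtain ⟨y, hy, rfl⟩ := hy
    rw [hg, hg, hg]
    exact hgate.2 y hy
  exact IsGate.eq hb (isGate_proj ⟨_, hgate'⟩) hgate'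

variable {i j : B} {x y : C}

lemma length_mul_simple_of_forall_le (hb : IsBuilding cs δ) {p q₀ : C}
    (hq₀ : q₀ ∈ residue cs δ {j} y)
    (hmin : ∀ q ∈ residue cs δ {j} y, cs.length (δ p q₀) ≤ cs.length (δ p q)) :
    cs.length (δ p q₀ * cs.simple j) = cs.length (δ p q₀) + 1 := by
  refine (cs.length_mul_simple _ j).resolve_right fun hdesc => ?_
  obtain ⟨q, hq₀q, hpq⟩ := hb.exists_step p q₀ j
  have := hmin q (mem_residue_of_delta_eq_simple hb (Set.mem_singleton j) hq₀ hq₀q)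
  rw [hpq] at this
  omega

lemma length_simple_mul_of_forall_le (hb : IsBuilding cs δ) {p₀ q : C}
    (hp₀ : p₀ ∈ residue cs δ {i} x)
    (hmin : ∀ p ∈ residue cs δ {i} x, cs.length (δ p₀ q) ≤ cs.length (δ p q)) :
    cs.length (cs.simple i * δ p₀ q) = cs.length (δ p₀ q) + 1 := by
  have := length_mul_simple_of_forall_le hb hp₀ fun p hp => by
    rw [hb.length_delta_comm p₀ q, hb.length_delta_comm p q]
    exact hmin p hp
  rwa [hb.delta_comm p₀, ← cs.inv_simple, ← mul_inv_rev, cs.length_inv, cs.length_inv] at this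

lemma exists_isGate_panel (hb : IsBuilding cs δ) (i : B) (x c : C) :
    ∃ g, IsGate cs δ (residue cs δ {i} x) c g := by
  set P := residue cs δ {i} x
  obtain ⟨g, hg, hmin⟩ : ∃ g ∈ P, ∀ y ∈ P, cs.length (δ c g) ≤ cs.length (δ c y) :=
    ⟨_, Function.argminOn_mem _ P ⟨x, self_mem_residue hb _ x⟩,
      fun y hy => Function.argminOn_le (fun y => cs.length (δ c y)) P hy⟩
  refine ⟨g, hg, fun y hy => ?_⟩
  obtain rfl | hne := eq_or_ne g y
  · rw [hb.delta_self, cs.length_one, add_zero]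
  have hgy := delta_eq_simple_of_mem_panel hb hg hy hne
  have hlen := length_mul_simple_of_forall_le hb hg hmin
  rw [hb.step_of_length c g y i hgy hlen, hlen, hgy, cs.length_simple]

lemma delta_eq_simple_mul_of_forall_le (hb : IsBuilding cs δ) {p p₀ q : C}
    (hp : p ∈ residue cs δ {i} x) (hp₀ : p₀ ∈ residue cs δ {i} x) (hne : p ≠ p₀)
    (hmin : ∀ p ∈ residue cs δ {i} x, cs.length (δ p₀ q) ≤ cs.length (δ p q)) :
    δ p q = cs.simple i * δ p₀ q := by
  have hpp₀ := delta_eq_simple_of_mem_panel hb hp hp₀ hne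
  have hlen : cs.length (δ p p₀ * δ p₀ q) = cs.length (δ p p₀) + cs.length (δ p₀ q) := by
    rw [hpp₀, length_simple_mul_of_forall_le hb hp₀ hmin, cs.length_simple, add_comm]
  rw [hb.delta_eq_mul hlen, hpp₀]

lemma projSet_panel_eq_of_length_eq (hb : IsBuilding cs δ) {p₀ q₀ : C}
    (hp₀ : p₀ ∈ residue cs δ {i} x) (hq₀ : q₀ ∈ residue cs δ {j} y)
    (hmin : ∀ p ∈ residue cs δ {i} x, ∀ q ∈ residue cs δ {j} y,
      cs.length (δ p₀ q₀) ≤ cs.length (δ p q))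
    (hlen : cs.length (cs.simple i * δ p₀ q₀ * cs.simple j) = cs.length (δ p₀ q₀)) :
    projSet cs δ (residue cs δ {i} x) (residue cs δ {j} y) = residue cs δ {i} x := by
  refine Set.Subset.antisymm ?_ fun p hp => ?_
  · rintro _ ⟨q, -, rfl⟩
    exact (isGate_proj (exists_isGate_panel hb i x q)).1
  obtain ⟨q, hq, hpq⟩ :
      ∃ q ∈ residue cs δ {j} y, cs.length (δ p q) ≤ cs.length (δ p₀ q₀) := by
    obtain rfl | hne := eq_or_ne p p₀
    · exact ⟨q₀, hq₀, le_rfl⟩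
    have hsw := delta_eq_simple_mul_of_forall_le hb hp hp₀ hne fun p hp => hmin p hp q₀ hq₀
    obtain ⟨q, hq₀q, hpq⟩ := hb.exists_step p q₀ j
    exact ⟨q, mem_residue_of_delta_eq_simple hb (Set.mem_singleton j) hq₀ hq₀q,
      by rw [hpq, hsw, hlen]⟩
  refine ⟨q, hq, proj_eq_of_forall_length_le hb (exists_isGate_panel hb i x q) hp fun p' hp' => ?_⟩
  rw [hb.length_delta_comm p q, hb.length_delta_comm p' q]
  exact hpq.trans (hmin p' hp' q hq)

lemma proj_panel_eq_of_length_eq_add_one (hb : IsBuilding cs δ) {p₀ q₀ q : C}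
    (hp₀ : p₀ ∈ residue cs δ {i} x) (hq₀ : q₀ ∈ residue cs δ {j} y)
    (hmin : ∀ p ∈ residue cs δ {i} x, ∀ q ∈ residue cs δ {j} y,
      cs.length (δ p₀ q₀) ≤ cs.length (δ p q))
    (hlen : cs.length (cs.simple i * δ p₀ q₀ * cs.simple j) =
      cs.length (cs.simple i * δ p₀ q₀) + 1)
    (hq : q ∈ residue cs δ {j} y) :
    proj cs δ (residue cs δ {i} x) q = p₀ := by
  refine proj_eq_of_forall_length_le hb (exists_isGate_panel hb i x q) hp₀ fun p hp => ?_
  rw [hb.length_delta_comm p₀ q, hb.length_delta_comm p q]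
  obtain rfl | hq' := eq_or_ne q₀ q
  · exact hmin p hp q₀ hq₀
  obtain rfl | hp' := eq_or_ne p p₀
  · exact le_rfl
  have ht := delta_eq_simple_of_mem_panel hb hq₀ hq hq'
  have hsw := delta_eq_simple_mul_of_forall_le hb hp hp₀ hp' fun p hp => hmin p hp q₀ hq₀
  have hs := length_simple_mul_of_forall_le hb hp₀ fun p hp => hmin p hp q₀ hq₀
  have hwt := length_mul_simple_of_forall_le hb hq₀ (hmin p₀ hp₀)
  rw [hb.step_of_length p₀ q₀ q j ht hwt, hb.step_of_length p q₀ q j ht (by rw [hsw, hlen]),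
    hsw, hlen, hwt, hs]
  omega

theorem parallel_of_proj_ne (hb : IsBuilding cs δ) {q₁ q₂ : C}
    (hq₁ : q₁ ∈ residue cs δ {j} y) (hq₂ : q₂ ∈ residue cs δ {j} y)
    (hne : proj cs δ (residue cs δ {i} x) q₁ ≠ proj cs δ (residue cs δ {i} x) q₂) :
    Parallel cs δ (residue cs δ {i} x) (residue cs δ {j} y) := by
  set P := residue cs δ {i} x
  set Q := residue cs δ {j} y
  obtain ⟨p₀, hp₀, q₀, hq₀, hmin⟩ : ∃ p₀ ∈ P, ∃ q₀ ∈ Q,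
      ∀ p ∈ P, ∀ q ∈ Q, cs.length (δ p₀ q₀) ≤ cs.length (δ p q) := by
    let f : C × C → ℕ := fun pq => cs.length (δ pq.1 pq.2)
    have hPQ : (P ×ˢ Q).Nonempty := ⟨(x, y), self_mem_residue hb _ x, self_mem_residue hb _ y⟩
    obtain ⟨hp₀, hq₀⟩ := Function.argminOn_mem f _ hPQ
    exact ⟨_, hp₀, _, hq₀, fun p hp q hq => Function.argminOn_le f _ (Set.mk_mem_prod hp hq)⟩
  rcases cs.length_mul_simple (cs.simple i * δ p₀ q₀) j with hlen | hlen
  · exact absurd ((proj_panel_eq_of_length_eq_add_one hb hp₀ hq₀ hmin hlen hq₁).trans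
      (proj_panel_eq_of_length_eq_add_one hb hp₀ hq₀ hmin hlen hq₂).symm) hne
  have hs := length_simple_mul_of_forall_le hb hp₀ fun p hp => hmin p hp q₀ hq₀
  have hswt : cs.length (cs.simple i * δ p₀ q₀ * cs.simple j) = cs.length (δ p₀ q₀) := by omega
  refine ⟨projSet_panel_eq_of_length_eq hb hp₀ hq₀ hmin hswt,
    projSet_panel_eq_of_length_eq hb hq₀ hp₀ (fun q hq p hp => ?_) ?_⟩
  · rw [hb.length_delta_comm p₀ q₀, hb.length_delta_comm p q]
    exact hmin p hp q hq
  · rw [hb.delta_comm p₀ q₀, cs.length_inv, ← hswt, ← cs.length_inv]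
    simp only [mul_inv_rev, cs.inv_simple, inv_inv, mul_assoc]

end Building

/-- If a group `H` of automorphisms stabilizes the panels `P` and `Q` and
fixes no chamber of `P`, then `P` and `Q` are parallel. -/
theorem statement6 (hb : IsBuilding cs δ) {P Q : Set C} (hP : IsPanel cs δ P)
    (hQ : IsPanel cs δ Q) (H : Subgroup (Equiv.Perm C)) (hH : ∀ g ∈ H, IsAutom δ g)
    (hHP : ∀ g ∈ H, g '' P = P) (hHQ : ∀ g ∈ H, g '' Q = Q)
    (hnofix : ∀ c ∈ P, ∃ g ∈ H, g c ≠ c) :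
    Parallel cs δ P Q := by
  obtain ⟨i, x, rfl⟩ := hP
  obtain ⟨j, y, rfl⟩ := hQ
  have hgate := exists_isGate_panel hb i x y
  obtain ⟨g, hgH, hg⟩ := hnofix _ (isGate_proj hgate).1
  have hgy : g y ∈ residue cs δ {j} y :=
    (hHQ g hgH).subset (Set.mem_image_of_mem g (self_mem_residue hb _ y))
  refine parallel_of_proj_ne hb hgy (self_mem_residue hb _ y) ?_
  rwa [proj_apply_of_isAutom hb hgate (hH g hgH) (hHP g hgH)]

end BldgPaper
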